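/- arXiv:2306.14303 — 7 statements merged into one kernel-verified Lean document; each statement's English description precedes it below -/
import Mathlib

section
/- Let S be a semigroup acting on a metric space X such that Ss ⊆ sS for every s ∈ S (e.g., S commutative or a group). If the action is orbit k-Lipschitzian (d(sx, sy) ≤ k·D(x, o(y)) for all x,y ∈ X and s ∈ S), then it is strong-orbit k-Lipschitzian: D(sx, o(sy)) ≤ k·D(x, o(y)) for all s ∈ S, x, y ∈ X. -/
open ENNReal NNReal

/-!
For `p ∈ S` write `p s = s q`. Then `p (s y) = s (q y)`, so the orbit Lipschitz bound at `s`
gives `d(s x, p (s y)) ≤ k D(x, o(q y))`, and `D(x, o(q y)) ≤ D(x, o(y))` because the orbit of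
`q y` lies inside the orbit of `y`.
-/

/-- `D(x, o(y))`: the largest distance from `x` to a point of the orbit `{y} ∪ {t y : t ∈ S}`. -/
noncomputable def orbitSupEDist {S X : Type*} [EDist X] (act : S → X → X) (x y : X) : ℝ≥0∞ :=
  edist x y ⊔ ⨆ t : S, edist x (act t y)

section

variable {S X : Type*} [EDist X] {act : S → X → X}

lemma edist_act_le_orbitSupEDist (x y : X) (t : S) :
    edist x (act t y) ≤ orbitSupEDist act x y :=
  le_sup_of_le_right (le_iSup (fun t => edist x (act t y)) t)

lemma orbitSupEDist_act_le [Mul S] (hact : ∀ (s t : S) (x : X), act (s * t) x = act s (act t x))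
    (x y : X) (q : S) : orbitSupEDist act x (act q y) ≤ orbitSupEDist act x y := by
  refine sup_le (edist_act_le_orbitSupEDist x y q) (iSup_le fun t => ?_)
  rw [← hact]
  exact edist_act_le_orbitSupEDist x y (t * q)

end

/-- If a semigroup `S` satisfies `Ss ⊆ sS` for every `s ∈ S`, then every orbit
k-Lipschitzian action of `S` on a metric space is strong-orbit k-Lipschitzian. -/
theorem orbit_lipschitz_implies_strong_orbit_lipschitz_of_Ss_subset_sS
    {S X : Type*} [Semigroup S] [MetricSpace X]
    (act : S → X → X) (hact : ∀ (s t : S) (x : X), act (s * t) x = act s (act t x))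
    (k : ℝ≥0∞)
    (hsub : ∀ s p : S, ∃ q : S, p * s = s * q)
    (horb : ∀ (s : S) (x y : X),
      edist (act s x) (act s y) ≤ k * (edist x y ⊔ ⨆ t : S, edist x (act t y))) :
    ∀ (s : S) (x y : X),
      (edist (act s x) (act s y) ⊔ ⨆ p : S, edist (act s x) (act p (act s y)))
        ≤ k * (edist x y ⊔ ⨆ t : S, edist x (act t y)) := by
  intro s x y
  refine sup_le (horb s x y) (iSup_le fun p => ?_)
  obtain ⟨q, hq⟩ := hsub s p
  have hcomm : act p (act s y) = act s (act q y) := by rw [← hact, hq, hact]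
  calc edist (act s x) (act p (act s y))
      = edist (act s x) (act s (act q y)) := by rw [hcomm]
    _ ≤ k * orbitSupEDist act x (act q y) := horb s x (act q y)
    _ ≤ k * orbitSupEDist act x y := mul_le_mul_right (orbitSupEDist_act_le hact x y q) k
end

section
/- Let 0 < a < 1 with a rational, and define S_a : [-1,1] → [-1,1] by S_a(x) = a·x if x is irrational and S_a(x) = -a·x if x is rational. Then S_a is orbit uniformly k-Lipschitzian with k = 3a, i.e., |S_a^n x − S_a^n y| ≤ 3a · sup{|x − S_a^m y| : m ≥ 0} for all x, y ∈ [-1,1] and n ≥ 1. -/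
open Function Filter Topology

/-!
Both branches of `S_a` multiply the absolute value by `a`, so `|S_a^n z| = a^n |z|` and the orbit
of `y` tends to `0`. Hence the supremum `M = sup_m |x - S_a^m y|` dominates both `|x - y|` (take
`m = 0`) and `|x|` (let `m → ∞`), so `|y| ≤ 2M`, and
`|S_a^n x - S_a^n y| ≤ a^n (|x| + |y|) ≤ 3aM` for `n ≥ 1`.
-/

section Contraction

variable {E : Type*} [SeminormedAddCommGroup E] {f : E → E} {c : ℝ}

theorem norm_iterate_le_pow_mul (hc : 0 ≤ c) (hf : ∀ z, ‖f z‖ ≤ c * ‖z‖) (z : E) (m : ℕ) :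
    ‖f^[m] z‖ ≤ c ^ m * ‖z‖ := by
  induction m with
  | zero => simp
  | succ m ih =>
    calc ‖f^[m + 1] z‖ = ‖f (f^[m] z)‖ := by rw [iterate_succ_apply']
      _ ≤ c * ‖f^[m] z‖ := hf _
      _ ≤ c * (c ^ m * ‖z‖) := by gcongr
      _ = c ^ (m + 1) * ‖z‖ := by ring

theorem tendsto_iterate_nhds_zero (hc0 : 0 ≤ c) (hc1 : c < 1) (hf : ∀ z, ‖f z‖ ≤ c * ‖z‖)
    (z : E) : Tendsto (fun m ↦ f^[m] z) atTop (𝓝 0) := by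
  refine squeeze_zero_norm (norm_iterate_le_pow_mul hc0 hf z) ?_
  simpa using (tendsto_pow_atTop_nhds_zero_of_lt_one hc0 hc1).mul_const ‖z‖

theorem bddAbove_range_norm_sub_iterate (hc0 : 0 ≤ c) (hc1 : c ≤ 1)
    (hf : ∀ z, ‖f z‖ ≤ c * ‖z‖) (x y : E) :
    BddAbove (Set.range fun m ↦ ‖x - f^[m] y‖) := by
  refine ⟨‖x‖ + ‖y‖, ?_⟩
  rintro _ ⟨m, rfl⟩
  have hy : ‖f^[m] y‖ ≤ ‖y‖ := (norm_iterate_le_pow_mul hc0 hf y m).trans <|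
    mul_le_of_le_one_left (norm_nonneg y) (pow_le_one₀ hc0 hc1)
  linarith [norm_sub_le x (f^[m] y)]

theorem norm_le_iSup_norm_sub_iterate (hc0 : 0 ≤ c) (hc1 : c < 1)
    (hf : ∀ z, ‖f z‖ ≤ c * ‖z‖) (x y : E) : ‖x‖ ≤ ⨆ m, ‖x - f^[m] y‖ := by
  have hlim : Tendsto (fun m ↦ ‖x - f^[m] y‖) atTop (𝓝 ‖x‖) := by
    simpa using ((tendsto_iterate_nhds_zero hc0 hc1 hf y).const_sub x).norm
  exact le_of_tendsto' hlim (le_ciSup (bddAbove_range_norm_sub_iterate hc0 hc1.le hf x y))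

theorem norm_iterate_sub_iterate_le_three_mul_iSup (hc0 : 0 ≤ c) (hc1 : c < 1)
    (hf : ∀ z, ‖f z‖ ≤ c * ‖z‖) (x y : E) {n : ℕ} (hn : n ≠ 0) :
    ‖f^[n] x - f^[n] y‖ ≤ 3 * c * ⨆ m, ‖x - f^[m] y‖ := by
  set M := ⨆ m, ‖x - f^[m] y‖
  have hxy : ‖x - y‖ ≤ M := by
    simpa using le_ciSup (bddAbove_range_norm_sub_iterate hc0 hc1.le hf x y) 0
  have hx : ‖x‖ ≤ M := norm_le_iSup_norm_sub_iterate hc0 hc1 hf x y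
  have hy : ‖y‖ ≤ ‖x‖ + ‖x - y‖ := norm_le_norm_add_norm_sub x y
  have hcn : c ^ n ≤ c := pow_le_of_le_one hc0 hc1.le hn
  calc ‖f^[n] x - f^[n] y‖ ≤ ‖f^[n] x‖ + ‖f^[n] y‖ := norm_sub_le _ _
    _ ≤ c ^ n * ‖x‖ + c ^ n * ‖y‖ :=
      add_le_add (norm_iterate_le_pow_mul hc0 hf x n) (norm_iterate_le_pow_mul hc0 hf y n)
    _ ≤ c * (‖x‖ + (‖x‖ + ‖x - y‖)) := by
      rw [← mul_add]; gcongr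
    _ ≤ c * (M + (M + M)) := by gcongr
    _ = 3 * c * M := by ring

end Contraction

/-- The map `S_a x = a·x` for `x` irrational, `S_a x = -a·x` for `x` rational,
with `a ∈ ℚ ∩ (0,1)`, is orbit uniformly `3a`-Lipschitzian on `[-1,1]`. -/
theorem Sa_orbit_uniformly_lipschitz (a : ℚ) (ha : 0 < a) (ha1 : (a : ℝ) < 1)
    (f : ℝ → ℝ)
    (hf : ∀ x : ℝ, (Irrational x → f x = (a : ℝ) * x) ∧ (¬ Irrational x → f x = -(a : ℝ) * x)) :
    ∀ x ∈ Set.Icc (-1 : ℝ) 1, ∀ y ∈ Set.Icc (-1 : ℝ) 1, ∀ n : ℕ, 1 ≤ n →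
      |f^[n] x - f^[n] y| ≤ 3 * (a : ℝ) * ⨆ m : ℕ, |x - f^[m] y| := by
  have ha0 : (0 : ℝ) ≤ a := by exact_mod_cast ha.le
  have hfa : ∀ z, ‖f z‖ = (a : ℝ) * ‖z‖ := by
    intro z
    by_cases hz : Irrational z
    · rw [(hf z).1 hz, norm_mul, Real.norm_of_nonneg ha0]
    · rw [(hf z).2 hz, neg_mul, norm_neg, norm_mul, Real.norm_of_nonneg ha0]
  intro x _ y _ n hn
  simpa only [Real.norm_eq_abs] using
    norm_iterate_sub_iterate_le_three_mul_iSup ha0 ha1 (fun z ↦ (hfa z).le) x y (by omega : n ≠ 0)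
end

section
/- Let X = [0,1] and define T(x) = x² for x ∈ [0,1) and T(1) = 0. Then the semigroup {T^n : n ∈ ℕ} satisfies condition (⋆) with constant k = 1: for every pair (x,y) ∈ X × X with D(x, o(y)) ≤ D(x, o(x)) and every n ∈ ℕ, inf over m ∈ ℕ of D(T^n x, o(T^{m+n} y)) ≤ D(x, o(y)). -/
/-!
Every orbit of `T` decreases inside `[0,1]` and comes arbitrarily close to `0`. Hence
`R := D(x, o(y)) ≥ x`, and some point `Tᵐ y` lies below `R` (below `x` if `x > 0`; for `x = 0`
take `m = 0`, since then `y = |x - y| ≤ R`). For that `m`, both `Tⁿ x ≤ x` and every point of the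
orbit of `T^(m+n) y` lie in `[0, R]`, so all their distances are at most `R`.
-/

open Function Set

section DecreasingSelfMap

variable {T : ℝ → ℝ} (hmaps : MapsTo T (Icc 0 1) (Icc 0 1)) (hle : ∀ z ∈ Icc (0 : ℝ) 1, T z ≤ z)

include hmaps hle in
theorem iterate_le_self_of_le_self (m : ℕ) {z : ℝ} (hz : z ∈ Icc (0 : ℝ) 1) : T^[m] z ≤ z := by
  induction m with
  | zero => rfl
  | succ m ih =>
    rw [iterate_succ_apply']
    exact (hle _ (hmaps.iterate m hz)).trans ih

include hmaps in
theorem bddAbove_range_abs_sub_iterate {x y : ℝ} (hx : x ∈ Icc (0 : ℝ) 1) (hy : y ∈ Icc (0 : ℝ) 1) :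
    BddAbove (range fun m : ℕ => |x - T^[m] y|) := by
  refine ⟨1, ?_⟩
  rintro _ ⟨m, rfl⟩
  have hm := hmaps.iterate m hy
  exact abs_sub_le_of_nonneg_of_le hx.1 hx.2 hm.1 hm.2 |>.trans (by simp)

variable (hsmall : ∀ z ∈ Icc (0 : ℝ) 1, ∀ ε > 0, ∃ m : ℕ, T^[m] z ≤ ε)

include hmaps hsmall in
theorem le_iSup_abs_sub_iterate {x y : ℝ} (hx : x ∈ Icc (0 : ℝ) 1) (hy : y ∈ Icc (0 : ℝ) 1) :
    x ≤ ⨆ m : ℕ, |x - T^[m] y| := by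
  refine le_of_forall_sub_le fun ε hε => ?_
  obtain ⟨m, hm⟩ := hsmall y hy ε hε
  refine le_ciSup_of_le (bddAbove_range_abs_sub_iterate hmaps hx hy) m ?_
  have := le_abs_self (x - T^[m] y)
  linarith

include hmaps hle hsmall in
theorem condition_star_of_le_self {x y : ℝ} (hx : x ∈ Icc (0 : ℝ) 1) (hy : y ∈ Icc (0 : ℝ) 1)
    (n : ℕ) :
    (⨅ m : ℕ, ⨆ j : ℕ, |T^[n] x - T^[j] (T^[m + n] y)|) ≤ ⨆ m : ℕ, |x - T^[m] y| := by
  set R := ⨆ m : ℕ, |x - T^[m] y|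
  have hbdd := bddAbove_range_abs_sub_iterate hmaps hx hy
  have hxR : x ≤ R := le_iSup_abs_sub_iterate hmaps hsmall hx hy
  obtain ⟨m, hmR⟩ : ∃ m : ℕ, T^[m] y ≤ R := by
    rcases hx.1.eq_or_lt with rfl | hx0
    · refine ⟨0, le_ciSup_of_le hbdd 0 ?_⟩
      simp [abs_of_nonneg hy.1]
    · obtain ⟨m, hm⟩ := hsmall y hy x hx0
      exact ⟨m, hm.trans hxR⟩
  have hbelow : BddBelow (range fun m : ℕ => ⨆ j : ℕ, |T^[n] x - T^[j] (T^[m + n] y)|) :=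
    ⟨0, by rintro _ ⟨m, rfl⟩; exact Real.iSup_nonneg fun j => abs_nonneg _⟩
  refine ciInf_le_of_le hbelow m (ciSup_le fun j => ?_)
  have hym := hmaps.iterate m hy
  have horbit : T^[j] (T^[m + n] y) = T^[j + n] (T^[m] y) := by
    simp only [← iterate_add_apply]
    congr 1
    omega
  rw [horbit]
  exact abs_sub_le_of_nonneg_of_le (hmaps.iterate n hx).1
    ((iterate_le_self_of_le_self hmaps hle n hx).trans hxR) (hmaps.iterate _ hym).1
    ((iterate_le_self_of_le_self hmaps hle _ hym).trans hmR)

end DecreasingSelfMap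

section SquareMap

variable {T : ℝ → ℝ} (hT : ∀ x : ℝ, T x = if x < 1 then x ^ 2 else 0)

include hT

theorem mapsTo_Icc_of_square_map : MapsTo T (Icc 0 1) (Icc 0 1) := by
  rintro z ⟨hz0, hz1⟩
  rw [hT]
  split_ifs
  · exact ⟨sq_nonneg z, pow_le_one₀ hz0 hz1⟩
  · exact ⟨le_rfl, zero_le_one⟩

theorem square_map_le_self {z : ℝ} (hz : z ∈ Icc (0 : ℝ) 1) : T z ≤ z := by
  rw [hT]
  split_ifs
  · nlinarith [hz.1, hz.2]
  · exact hz.1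

theorem iterate_square_map_of_lt_one (m : ℕ) {z : ℝ} (hz0 : 0 ≤ z) (hz1 : z < 1) :
    T^[m] z = z ^ 2 ^ m := by
  induction m generalizing z with
  | zero => simp
  | succ m ih =>
    have hTz : T z = z ^ 2 := by simp [hT, hz1]
    rw [iterate_succ_apply, hTz, ih (sq_nonneg z) (by nlinarith), ← pow_mul, ← pow_succ']

theorem exists_iterate_square_map_le {z : ℝ} (hz : z ∈ Icc (0 : ℝ) 1) {ε : ℝ} (hε : 0 < ε) :
    ∃ m : ℕ, T^[m] z ≤ ε := by
  rcases hz.2.lt_or_eq with hz1 | rfl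
  · obtain ⟨m, hm⟩ := exists_pow_lt_of_lt_one hε hz1
    refine ⟨m, ?_⟩
    rw [iterate_square_map_of_lt_one hT m hz.1 hz1]
    exact (pow_le_pow_of_le_one hz.1 hz1.le Nat.lt_two_pow_self.le).trans hm.le
  · exact ⟨1, by simp [hT, hε.le]⟩

end SquareMap

/-- For `T x = x²` on `[0,1)`, `T 1 = 0`, the semigroup `{Tⁿ}` satisfies
condition (⋆) with constant `k = 1`. -/
theorem square_map_condition_star (T : ℝ → ℝ)
    (hT : ∀ x : ℝ, T x = if x < 1 then x ^ 2 else 0) :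
    ∀ x ∈ Set.Icc (0 : ℝ) 1, ∀ y ∈ Set.Icc (0 : ℝ) 1,
      (⨆ m : ℕ, |x - T^[m] y|) ≤ (⨆ m : ℕ, |x - T^[m] x|) →
      ∀ n : ℕ,
        (⨅ m : ℕ, ⨆ j : ℕ, |T^[n] x - T^[j] (T^[m + n] y)|) ≤ ⨆ m : ℕ, |x - T^[m] y| :=
  fun _ hx _ hy _ n =>
    condition_star_of_le_self (mapsTo_Icc_of_square_map hT) (fun _ => square_map_le_self hT)
      (fun _ hz _ hε => exists_iterate_square_map_le hT hz hε) hx hy n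
end

section
/- Let T : [0,1] → [0,1] be T(x) = x² for x ∈ [0,1) and T(1) = 0. Then for every k < 2 the semigroup {T^n : n ∈ ℕ} is not an orbit k-Lipschitzian action: sup over n ∈ ℕ and y ∈ [0,1) of d(T^n(y/2), T^n(y)) / D(y/2, o(y)) equals 2, where D(y/2, o(y)) = y/2. -/
/-! On `[0, 1)` the map is `x ↦ x²`, so `Tⁿ y = y ^ 2ⁿ` and the orbit of `y` stays in `[0, y]`;
hence `D(y/2, o(y)) = y/2` and, with `N = 2ⁿ`, the ratio is `(y ^ N - (y/2) ^ N) / (y/2) ≤ 2`.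
As `y → 1⁻` it tends to `2 (1 - 2⁻ᴺ)`, which exceeds any `k < 2` once `N` is large. -/

open Function Filter Set Topology

lemma iterate_eq_pow_two_pow {T : ℝ → ℝ} (hT : EqOn T (· ^ 2) (Ico 0 1)) (n : ℕ)
    {x : ℝ} (hx : x ∈ Ico 0 1) : T^[n] x = x ^ 2 ^ n := by
  induction n generalizing x with
  | zero => simp
  | succ n ih =>
    have hx2 : x ^ 2 ∈ Ico (0 : ℝ) 1 :=
      ⟨by positivity, pow_lt_one₀ hx.1 hx.2 two_ne_zero⟩
    rw [iterate_succ_apply, hT hx, ih hx2, ← pow_mul, pow_succ']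

lemma abs_iterate_half_sub_iterate {T : ℝ → ℝ} (hT : EqOn T (· ^ 2) (Ico 0 1)) (n : ℕ)
    {y : ℝ} (hy : y ∈ Ico 0 1) :
    |T^[n] (y / 2) - T^[n] y| = y ^ 2 ^ n - (y / 2) ^ 2 ^ n := by
  have hy2 : y / 2 ∈ Ico (0 : ℝ) 1 := ⟨by linarith [hy.1], by linarith [hy.1, hy.2]⟩
  rw [iterate_eq_pow_two_pow hT n hy, iterate_eq_pow_two_pow hT n hy2, abs_sub_comm,
    abs_of_nonneg (sub_nonneg.2 (pow_le_pow_left₀ hy2.1 (by linarith [hy.1]) _))]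

lemma iSup_abs_half_sub_iterate {T : ℝ → ℝ} (hT : EqOn T (· ^ 2) (Ico 0 1)) {y : ℝ}
    (hy : y ∈ Ico 0 1) : ⨆ m : ℕ, |y / 2 - T^[m] y| = y / 2 := by
  have hle : ∀ m : ℕ, |y / 2 - T^[m] y| ≤ y / 2 := fun m ↦ by
    rw [iterate_eq_pow_two_pow hT m hy, abs_le]
    have : y ^ 2 ^ m ≤ y := pow_le_of_le_one hy.1 hy.2.le (by positivity)
    constructor <;> linarith [pow_nonneg hy.1 (2 ^ m)]
  refine le_antisymm (ciSup_le hle) ?_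
  calc y / 2 = |y / 2 - T^[0] y| := by
          rw [iterate_zero_apply, abs_sub_comm, abs_of_nonneg (by linarith [hy.1])]; ring
    _ ≤ ⨆ m : ℕ, |y / 2 - T^[m] y| := le_ciSup ⟨y / 2, forall_mem_range.2 hle⟩ 0

lemma pow_sub_half_pow_le {y : ℝ} (hy₀ : 0 ≤ y) (hy₁ : y ≤ 1) {N : ℕ} (hN : N ≠ 0) :
    y ^ N - (y / 2) ^ N ≤ y := by
  linarith [pow_le_of_le_one hy₀ hy₁ hN, pow_nonneg (div_nonneg hy₀ zero_le_two) N]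

lemma eventually_exists_mul_half_lt_pow_sub_half_pow {k : ℝ} (hk : k < 2) :
    ∀ᶠ N : ℕ in atTop, ∃ y ∈ Ioo (0 : ℝ) 1, k * (y / 2) < y ^ N - (y / 2) ^ N := by
  have hsmall : ∀ᶠ N : ℕ in atTop, (1 / 2 : ℝ) ^ N < 1 - k / 2 :=
    (tendsto_pow_atTop_nhds_zero_of_lt_one (by norm_num) (by norm_num)).eventually
      (gt_mem_nhds (by linarith))
  filter_upwards [hsmall] with N hN
  have hf : Tendsto (fun y : ℝ ↦ y ^ N - (y / 2) ^ N - k * (y / 2)) (𝓝[<] 1)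
      (𝓝 (1 - (1 / 2) ^ N - k / 2)) := by
    refine tendsto_nhdsWithin_of_tendsto_nhds ((Continuous.tendsto' ?_ 1 _ (by ring)))
    fun_prop
  obtain ⟨y, hpos, hy⟩ :=
    ((hf.eventually (lt_mem_nhds (a := 0) (by linarith))).and (Ioo_mem_nhdsLT one_pos)).exists
  exact ⟨y, hy, by linarith⟩

lemma exists_mul_half_lt_pow_two_pow_sub_half_pow {k : ℝ} (hk : k < 2) :
    ∃ n ≥ 1, ∃ y ∈ Ioo (0 : ℝ) 1, k * (y / 2) < y ^ 2 ^ n - (y / 2) ^ 2 ^ n :=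
  ((tendsto_pow_atTop_atTop_of_one_lt one_lt_two).eventually
    (eventually_exists_mul_half_lt_pow_sub_half_pow hk) |>.and (eventually_ge_atTop 1)).exists
    |>.imp fun _ h ↦ ⟨h.2, h.1⟩

/-- For `T x = x²` on `[0,1)`, `T 1 = 0`, the semigroup `{Tⁿ}` is not an orbit
k-Lipschitzian action for any `k < 2`; in fact the supremum of the relevant ratios is `2`. -/
theorem square_map_not_orbit_lipschitz (T : ℝ → ℝ)
    (hT : ∀ x : ℝ, T x = if x < 1 then x ^ 2 else 0) :
    (∀ k : ℝ, k < 2 →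
      ¬ (∀ n : ℕ, 1 ≤ n → ∀ x ∈ Set.Icc (0 : ℝ) 1, ∀ y ∈ Set.Icc (0 : ℝ) 1,
          |T^[n] x - T^[n] y| ≤ k * ⨆ m : ℕ, |x - T^[m] y|)) ∧
    sSup {r : ℝ | ∃ n : ℕ, ∃ y ∈ Set.Ico (0 : ℝ) 1,
        r = |T^[n] (y / 2) - T^[n] y| / (y / 2)} = 2 := by
  have hsq : EqOn T (· ^ 2) (Ico 0 1) := fun x hx ↦ by simp [hT, hx.2]
  constructor
  · intro k hk hlip
    obtain ⟨n, hn, y, hy, hlt⟩ := exists_mul_half_lt_pow_two_pow_sub_half_pow hk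
    have := hlip n hn (y / 2) ⟨by linarith [hy.1], by linarith [hy.2]⟩ y ⟨hy.1.le, hy.2.le⟩
    rw [abs_iterate_half_sub_iterate hsq n (Ioo_subset_Ico_self hy),
      iSup_abs_half_sub_iterate hsq (Ioo_subset_Ico_self hy)] at this
    linarith
  · refine csSup_eq_of_forall_le_of_forall_lt_exists_gt ⟨_, 0, 0, ⟨le_rfl, one_pos⟩, rfl⟩ ?_ ?_
    · rintro _ ⟨n, y, hy, rfl⟩
      rw [abs_iterate_half_sub_iterate hsq n hy]
      exact div_le_of_le_mul₀ (by linarith [hy.1]) zero_le_two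
        (by linarith [pow_sub_half_pow_le hy.1 hy.2.le (pow_ne_zero n two_ne_zero)])
    · intro w hw
      obtain ⟨n, -, y, hy, hlt⟩ := exists_mul_half_lt_pow_two_pow_sub_half_pow hw
      refine ⟨_, ⟨n, y, Ioo_subset_Ico_self hy, rfl⟩, ?_⟩
      rw [abs_iterate_half_sub_iterate hsq n (Ioo_subset_Ico_self hy),
        lt_div_iff₀ (half_pos hy.1)]
      exact hlt
end

section
/- Let X be the closed unit ball of ℓ^p (1 ≤ p < ∞), {e_n} the standard unit vectors, and T : X → X defined by T(e_n) = e_{n+1} and T(x) = e_1 for x not equal to any e_n. Then T has no fixed point, and for every x ∈ X, limsup_n ‖x − e_n‖_p = (‖x‖_p^p + 1)^{1/p}. -/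
open ENNReal NNReal

/-!
Injectivity of `n ↦ eₙ` rules out a fixed point: `T eₙ = eₙ₊₁ ≠ eₙ`, and any other `x` is sent
to `e₀ ≠ x`. For the limsup, subtracting `eₙ` from `x` only changes the `n`-th coordinate, so
`‖x - eₙ‖ ^ p = ‖x‖ ^ p + |xₙ - 1| ^ p - |xₙ| ^ p`, which tends to `‖x‖ ^ p + 1` because `xₙ → 0`;
the limsup is then an actual limit.
-/

open Filter Topology Function

theorem not_isFixedPt_of_map_eq_succ_of_map_eq_zero {X : Type*} (T : X → X) (e : ℕ → X)
    (he : Injective e) (hT1 : ∀ n, T (e n) = e (n + 1)) (hT2 : ∀ x, (∀ n, x ≠ e n) → T x = e 0)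
    (x : X) : ¬IsFixedPt T x := by
  by_cases hx : ∃ n, x = e n
  · obtain ⟨n, rfl⟩ := hx
    rw [IsFixedPt, hT1, he.eq_iff]
    omega
  · rw [IsFixedPt, hT2 x (not_exists.1 hx)]
    exact fun h => hx ⟨0, h.symm⟩

namespace lp

variable {α : Type*} {p : ℝ≥0∞}

theorem single_left_injective [DecidableEq α] {E : Type*} [NormedAddCommGroup E] {a : E}
    (ha : a ≠ 0) : Injective fun i : α => lp.single p i a := by
  intro i j hij
  by_contra hne
  have hi := congrArg (fun f : lp (fun _ : α => E) p => f i) hij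
  simp [hne, ha] at hi

theorem tendsto_norm_cofinite_zero {E : α → Type*} [∀ i, NormedAddCommGroup (E i)]
    (hp : 0 < p.toReal) (f : lp E p) : Tendsto (fun i => ‖f i‖) cofinite (𝓝 0) := by
  have h := ((lp.memℓp f |>.summable hp).tendsto_cofinite_zero).rpow_const
    (p := p.toReal⁻¹) (Or.inr (inv_nonneg.2 hp.le))
  rw [Real.zero_rpow (inv_ne_zero hp.ne')] at h
  exact h.congr fun i => Real.rpow_rpow_inv (norm_nonneg _) hp.ne'

theorem norm_sub_single_rpow [DecidableEq α] {E : α → Type*} [∀ i, NormedAddCommGroup (E i)]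
    (hp : 0 < p.toReal) (f : lp E p) (i : α) (a : E i) :
    ‖f - lp.single p i a‖ ^ p.toReal
      = ‖f‖ ^ p.toReal + (‖f i - a‖ ^ p.toReal - ‖f i‖ ^ p.toReal) := by
  have hcoord : (fun j => ‖(f - lp.single p i a) j‖ ^ p.toReal)
      = (fun j => ‖f j‖ ^ p.toReal)
        + Pi.single (M := fun _ => ℝ) i (‖f i - a‖ ^ p.toReal - ‖f i‖ ^ p.toReal) := by
    funext j
    rcases eq_or_ne j i with rfl | hj
    · simp
    · simp [hj]
  rw [lp.norm_rpow_eq_tsum hp, lp.norm_rpow_eq_tsum hp, hcoord]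
  exact ((lp.memℓp f |>.summable hp).hasSum.add (hasSum_pi_single i _)).tsum_eq

theorem tendsto_norm_sub_single [DecidableEq α] {E : Type*} [NormedAddCommGroup E]
    (hp : 0 < p.toReal) (f : lp (fun _ : α => E) p) (a : E) :
    Tendsto (fun i => ‖f - lp.single p i a‖) cofinite
      (𝓝 ((‖f‖ ^ p.toReal + ‖a‖ ^ p.toReal) ^ (1 / p.toReal))) := by
  have hf : Tendsto (fun i => f i) cofinite (𝓝 0) :=
    tendsto_zero_iff_norm_tendsto_zero.2 (tendsto_norm_cofinite_zero hp f)
  have hsub : Tendsto (fun i => ‖f i - a‖ ^ p.toReal) cofinite (𝓝 (‖a‖ ^ p.toReal)) := by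
    simpa using (hf.sub_const a).norm.rpow_const (p := p.toReal) (Or.inr hp.le)
  have hcoord : Tendsto (fun i => ‖f i‖ ^ p.toReal) cofinite (𝓝 0) := by
    simpa [Real.zero_rpow hp.ne'] using hf.norm.rpow_const (p := p.toReal) (Or.inr hp.le)
  have hrpow : Tendsto (fun i => ‖f - lp.single p i a‖ ^ p.toReal) cofinite
      (𝓝 (‖f‖ ^ p.toReal + ‖a‖ ^ p.toReal)) := by
    simpa [norm_sub_single_rpow hp] using tendsto_const_nhds.add (hsub.sub hcoord)
  refine (hrpow.rpow_const (p := 1 / p.toReal) (Or.inr (by positivity))).congr fun i => ?_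
  rw [one_div]
  exact Real.rpow_rpow_inv (lp.norm_nonneg' _) hp.ne'

end lp

/-- On the closed unit ball of `ℓ^p` (`1 ≤ p < ∞`), the map `T` sending `eₙ` to `eₙ₊₁`
and everything else to `e₀` has no fixed point, and
`limsup_n ‖x - eₙ‖ = (‖x‖^p + 1)^(1/p)` for every `x` in the ball. -/
theorem lp_shift_map_no_fixed_point (p : ℝ≥0∞) [Fact (1 ≤ p)] (hp' : p ≠ ⊤)
    (T : lp (fun _ : ℕ => ℝ) p → lp (fun _ : ℕ => ℝ) p)
    (e : ℕ → lp (fun _ : ℕ => ℝ) p)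
    (he : ∀ n : ℕ, e n = lp.single p n 1)
    (hT1 : ∀ n : ℕ, T (e n) = e (n + 1))
    (hT2 : ∀ x : lp (fun _ : ℕ => ℝ) p, (∀ n : ℕ, x ≠ e n) → T x = e 0) :
    (∀ x : lp (fun _ : ℕ => ℝ) p, ‖x‖ ≤ 1 → T x ≠ x) ∧
    (∀ x : lp (fun _ : ℕ => ℝ) p, ‖x‖ ≤ 1 →
      Filter.limsup (fun n : ℕ => ‖x - e n‖) Filter.atTop
        = (‖x‖ ^ p.toReal + 1) ^ (1 / p.toReal)) := by
  have hp : 0 < p.toReal :=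
    ENNReal.toReal_pos (zero_lt_one.trans_le Fact.out).ne' hp'
  have he_inj : Injective e := by
    simpa only [funext he] using lp.single_left_injective (α := ℕ) (p := p) one_ne_zero
  refine ⟨fun x _ => not_isFixedPt_of_map_eq_succ_of_map_eq_zero T e he_inj hT1 hT2 x,
    fun x _ => ?_⟩
  have h := lp.tendsto_norm_sub_single hp x (1 : ℝ)
  rw [Nat.cofinite_eq_atTop, norm_one, Real.one_rpow] at h
  simp only [← he] at h
  exact h.limsup_eq
end

section
/- In every proper metric space X (all closed balls compact), property (P) for nets holds: for any two bounded nets (x_s) and (z_s) indexed by a directed set with z_s ∈ cov({x_j : j ≥ s}) for all s, there exists z ∈ ⋂_s cov({z_j : j ≥ s}) such that limsup_s d(z, x_s) ≤ limsup_t limsup_s d(z_t, x_s). -/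
/-- The admissible cover of a set: the intersection of all closed balls containing it. -/
def admCov {X : Type*} [MetricSpace X] (C : Set X) : Set X :=
  ⋂ c : X, ⋂ r : ℝ, ⋂ _ : C ⊆ Metric.closedBall c r, Metric.closedBall c r

/-!
Since closed balls are compact, the bounded net `(z_t)` has a cluster point `w`. It lies in
every closed set containing a tail of `(z_t)`, in particular in the closed set
`cov({z_j : j ≥ s})`. The function `g y = limsup_s d(y, x_s)` is `1`-Lipschitz, so `g w` is
a cluster point of `(g z_t)` and hence at most `limsup_t g z_t`.
-/

open Filter Metric Set Bornology

section admCov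

variable {X : Type*} [MetricSpace X]

theorem isClosed_admCov (C : Set X) : IsClosed (admCov C) :=
  isClosed_iInter fun _ => isClosed_iInter fun _ => isClosed_iInter fun _ => isClosed_closedBall

theorem subset_admCov (C : Set X) : C ⊆ admCov C := fun _ hy =>
  mem_iInter.2 fun _ => mem_iInter.2 fun _ => mem_iInter.2 fun hC => hC hy

theorem MapClusterPt.mem_admCov {ι : Type*} {l : Filter ι} {u : ι → X} {w : X} {C : Set X}
    (hw : MapClusterPt w l u) (hC : ∀ᶠ i in l, u i ∈ C) : w ∈ admCov C :=
  (isClosed_admCov C).mem_of_mapClusterPt hw (hC.mono fun _ hi => subset_admCov C hi)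

end admCov

theorem exists_mapClusterPt_of_isBounded_range {X ι : Type*} [PseudoMetricSpace X]
    [ProperSpace X] {l : Filter ι} [NeBot l] {u : ι → X} (hu : IsBounded (range u)) :
    ∃ w, MapClusterPt w l u :=
  let ⟨w, _, hw⟩ := hu.isCompact_closure.exists_mapClusterPt
    (tendsto_principal.2 (.of_forall fun i => subset_closure (mem_range_self i)))
  ⟨w, hw⟩

section limsupDist

variable {X ι : Type*} [PseudoMetricSpace X] {f : Filter ι} {x : ι → X}

theorem isBoundedUnder_le_dist_of_isBounded_range (hx : IsBounded (range x)) (w : X) :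
    IsBoundedUnder (· ≤ ·) f fun s => dist w (x s) :=
  let ⟨r, hr⟩ := hx.subset_closedBall w
  isBoundedUnder_of ⟨r, fun s => (dist_comm _ _).trans_le (hr (mem_range_self s))⟩

variable [NeBot f]

theorem limsup_dist_le_dist_add_limsup_dist (hx : IsBounded (range x)) (w y : X) :
    limsup (fun s => dist w (x s)) f ≤ dist w y + limsup (fun s => dist y (x s)) f := by
  have hbdd := isBoundedUnder_le_dist_of_isBounded_range (f := f) hx
  have hcobdd (v : X) : IsCoboundedUnder (· ≤ ·) f fun s => dist v (x s) :=
    isCoboundedUnder_le_of_le f fun _ => dist_nonneg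
  calc limsup (fun s => dist w (x s)) f
      ≤ limsup (fun s => dist w y + dist y (x s)) f :=
        limsup_le_limsup (.of_forall fun s => dist_triangle w y (x s)) (hcobdd w)
          (isBoundedUnder_le_add isBoundedUnder_const (hbdd y))
    _ = dist w y + limsup (fun s => dist y (x s)) f :=
        limsup_const_add f _ _ (hbdd y) (hcobdd y)

theorem lipschitzWith_limsup_dist (hx : IsBounded (range x)) :
    LipschitzWith 1 fun w => limsup (fun s => dist w (x s)) f :=
  LipschitzWith.of_le_add fun w y =>
    (limsup_dist_le_dist_add_limsup_dist hx w y).trans_eq (add_comm _ _)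

theorem limsup_dist_le_limsup_limsup_dist_of_mapClusterPt {κ : Type*} {l : Filter κ}
    {z : κ → X} {w : X} (hx : IsBounded (range x)) (hz : IsBounded (range z))
    (hw : MapClusterPt w l z) :
    limsup (fun s => dist w (x s)) f ≤
      limsup (fun t => limsup (fun s => dist (z t) (x s)) f) l := by
  have hg := lipschitzWith_limsup_dist (f := f) hx
  have hbdd := (hg.isBounded_image hz).bddAbove
  rw [← range_comp] at hbdd
  exact (hw.continuousAt_comp hg.continuous.continuousAt).le_limsup hbdd.isBoundedUnder_of_range

end limsupDist

theorem proper_space_property_P_general {X : Type*} [MetricSpace X] [ProperSpace X]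
    {ι : Type*} [Preorder ι] [IsDirected ι (· ≤ ·)] [Nonempty ι]
    (x z : ι → X)
    (hx : Bornology.IsBounded (Set.range x))
    (hz : Bornology.IsBounded (Set.range z)) :
    ∃ w ∈ ⋂ s : ι, admCov {v : X | ∃ j : ι, s ≤ j ∧ v = z j},
      Filter.limsup (fun s : ι => dist w (x s)) Filter.atTop ≤
        Filter.limsup
          (fun t : ι => Filter.limsup (fun s : ι => dist (z t) (x s)) Filter.atTop)
          Filter.atTop := by
  obtain ⟨w, hw⟩ := exists_mapClusterPt_of_isBounded_range (l := atTop) hz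
  refine ⟨w, mem_iInter.2 fun s => hw.mem_admCov ?_,
    limsup_dist_le_limsup_limsup_dist_of_mapClusterPt hx hz hw⟩
  exact (eventually_ge_atTop s).mono fun j hj => ⟨j, hj, rfl⟩

/-- Every proper metric space has property (P) for nets. -/
theorem proper_space_property_P {X : Type*} [MetricSpace X] [ProperSpace X]
    {ι : Type*} [Preorder ι] [IsDirected ι (· ≤ ·)] [Nonempty ι]
    (x z : ι → X)
    (hx : Bornology.IsBounded (Set.range x))
    (hz : Bornology.IsBounded (Set.range z))
    (hzx : ∀ s : ι, z s ∈ admCov {w : X | ∃ j : ι, s ≤ j ∧ w = x j}) :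
    ∃ w ∈ ⋂ s : ι, admCov {v : X | ∃ j : ι, s ≤ j ∧ v = z j},
      Filter.limsup (fun s : ι => dist w (x s)) Filter.atTop ≤
        Filter.limsup
          (fun t : ι => Filter.limsup (fun s : ι => dist (z t) (x s)) Filter.atTop)
          Filter.atTop :=
  proper_space_property_P_general x z hx hz
end

section
/- Let X be a complete metric space and S a semigroup acting on X such that the action is strong-orbit k-Lipschitzian with k < 1 (i.e., D(sx, o(sy)) ≤ k·D(x, o(y)) for all s ∈ S and x, y ∈ X). If some orbit is bounded, then there exists x ∈ X with sx = x for all s ∈ S. -/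
open ENNReal NNReal Filter Topology

/-!
Write `D(x, o(y)) = max (d(x, y), sup_t d(x, t y))`. Taking `x = y` in the contraction condition
shows that the orbit radius `ρ(y) = D(y, o(y))` shrinks by the factor `k` along each map `s`, so for
a point `x₀` with bounded orbit the iterates `sⁿ x₀` form a Cauchy sequence whose orbit radii tend
to `0`. Its limit `x` then satisfies `inf_y D(x, o(y)) = 0`, and this forces `t x = x` for every `t`,
because `d(t x, x) ≤ d(t x, t y) + d(t y, x) ≤ (k + 1) D(x, o(y))`.
-/

section OrbitEDist

variable {S X : Type*} [PseudoEMetricSpace X]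

/-- The distance `D(x, o(y))` from `x` to the farthest point of the orbit `o(y) = {y} ∪ S y`. -/
noncomputable def orbitEDist (act : S → X → X) (x y : X) : ℝ≥0∞ :=
  edist x y ⊔ ⨆ t, edist x (act t y)

variable (act : S → X → X)

theorem edist_le_orbitEDist (x y : X) : edist x y ≤ orbitEDist act x y :=
  le_sup_left

theorem edist_act_le_orbitEDist (x y : X) (t : S) : edist x (act t y) ≤ orbitEDist act x y :=
  le_sup_of_le_right (le_iSup (fun t => edist x (act t y)) t)

theorem orbitEDist_self (x : X) : orbitEDist act x x = ⨆ t, edist x (act t x) := by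
  simp [orbitEDist]

theorem orbitEDist_le_edist_add_orbitEDist_self (x y : X) :
    orbitEDist act x y ≤ edist x y + orbitEDist act y y := by
  refine sup_le le_self_add (iSup_le fun t => ?_)
  calc edist x (act t y) ≤ edist x y + edist y (act t y) := edist_triangle _ _ _
    _ ≤ edist x y + orbitEDist act y y := by gcongr; exact edist_act_le_orbitEDist act y y t

theorem iInf_orbitEDist_eq_zero_of_tendsto {x : X} {u : ℕ → X} (hux : Tendsto u atTop (𝓝 x))
    (hρ : Tendsto (fun n => orbitEDist act (u n) (u n)) atTop (𝓝 0)) :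
    ⨅ y, orbitEDist act x y = 0 := by
  have hdist : Tendsto (fun n => edist x (u n)) atTop (𝓝 0) := by
    simpa only [edist_comm x] using (tendsto_iff_edist_tendsto_0.mp hux)
  have hbound : Tendsto (fun n => edist x (u n) + orbitEDist act (u n) (u n)) atTop (𝓝 0) := by
    simpa using hdist.add hρ
  refine nonpos_iff_eq_zero.mp (ge_of_tendsto' hbound fun n => ?_)
  exact (iInf_le _ (u n)).trans (orbitEDist_le_edist_add_orbitEDist_self act x (u n))

end OrbitEDist

def StrongOrbitLipschitzWith {S X : Type*} [PseudoEMetricSpace X] (k : ℝ≥0) (act : S → X → X) :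
    Prop :=
  ∀ s x y, orbitEDist act (act s x) (act s y) ≤ k * orbitEDist act x y

namespace StrongOrbitLipschitzWith

variable {S X : Type*} {act : S → X → X} {k : ℝ≥0}

theorem orbitEDist_self_iterate_le [PseudoEMetricSpace X] (h : StrongOrbitLipschitzWith k act)
    (s : S) (x : X) (n : ℕ) :
    orbitEDist act ((act s)^[n] x) ((act s)^[n] x) ≤ k ^ n * orbitEDist act x x := by
  induction n with
  | zero => simp
  | succ n ih =>
    rw [Function.iterate_succ_apply']
    calc _ ≤ k * orbitEDist act ((act s)^[n] x) ((act s)^[n] x) := h s _ _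
      _ ≤ k * (k ^ n * orbitEDist act x x) := by gcongr
      _ = k ^ (n + 1) * orbitEDist act x x := by ring

theorem cauchySeq_iterate [PseudoEMetricSpace X] (h : StrongOrbitLipschitzWith k act) (hk : k < 1)
    (s : S) {x₀ : X} (hx₀ : orbitEDist act x₀ x₀ ≠ ⊤) :
    CauchySeq fun n => (act s)^[n] x₀ := by
  refine cauchySeq_of_edist_le_geometric (k : ℝ≥0∞) _ (mod_cast hk) hx₀ fun n => ?_
  rw [Function.iterate_succ_apply', mul_comm]
  exact (edist_act_le_orbitEDist act _ _ s).trans (h.orbitEDist_self_iterate_le s x₀ n)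

theorem tendsto_orbitEDist_self_iterate [PseudoEMetricSpace X] (h : StrongOrbitLipschitzWith k act)
    (hk : k < 1) (s : S) {x₀ : X} (hx₀ : orbitEDist act x₀ x₀ ≠ ⊤) :
    Tendsto (fun n => orbitEDist act ((act s)^[n] x₀) ((act s)^[n] x₀)) atTop (𝓝 0) := by
  have hgeom : Tendsto (fun n => (k : ℝ≥0∞) ^ n * orbitEDist act x₀ x₀) atTop (𝓝 0) := by
    simpa using ENNReal.Tendsto.mul_const
      (ENNReal.tendsto_pow_atTop_nhds_zero_of_lt_one (mod_cast hk)) (Or.inr hx₀)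
  exact tendsto_of_tendsto_of_tendsto_of_le_of_le tendsto_const_nhds hgeom
    (fun _ => zero_le) (h.orbitEDist_self_iterate_le s x₀)

theorem edist_act_self_le [PseudoEMetricSpace X] (h : StrongOrbitLipschitzWith k act) (s : S)
    (x y : X) : edist (act s x) x ≤ (k + 1) * orbitEDist act x y :=
  calc edist (act s x) x ≤ edist (act s x) (act s y) + edist (act s y) x := edist_triangle _ _ _
    _ ≤ k * orbitEDist act x y + orbitEDist act x y := by
      rw [edist_comm (act s y)]
      exact add_le_add ((edist_le_orbitEDist act _ _).trans (h s x y))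
        (edist_act_le_orbitEDist act x y s)
    _ = (k + 1) * orbitEDist act x y := by ring

theorem act_eq_self_of_iInf_orbitEDist_eq_zero [EMetricSpace X]
    (h : StrongOrbitLipschitzWith k act) {x : X} (hx : ⨅ y, orbitEDist act x y = 0) (s : S) :
    act s x = x := by
  have hk₀ : (k : ℝ≥0∞) + 1 ≠ 0 := by positivity
  have hk₁ : (k : ℝ≥0∞) + 1 ≠ ⊤ := by finiteness
  rw [← edist_le_zero, ← mul_zero ((k : ℝ≥0∞) + 1), ← hx, ENNReal.mul_iInf_of_ne hk₀ hk₁]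
  exact le_iInf (h.edist_act_self_le s x)

theorem exists_forall_act_eq_self [EMetricSpace X] [CompleteSpace X]
    (h : StrongOrbitLipschitzWith k act) (hk : k < 1) {x₀ : X} (hx₀ : orbitEDist act x₀ x₀ ≠ ⊤) :
    ∃ x : X, ∀ s : S, act s x = x := by
  rcases isEmpty_or_nonempty S with hS | ⟨⟨s⟩⟩
  · exact ⟨x₀, isEmptyElim⟩
  obtain ⟨x, hx⟩ := cauchySeq_tendsto_of_complete (h.cauchySeq_iterate hk s hx₀)
  exact ⟨x, h.act_eq_self_of_iInf_orbitEDist_eq_zero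
    (iInf_orbitEDist_eq_zero_of_tendsto act hx (h.tendsto_orbitEDist_self_iterate hk s hx₀))⟩

end StrongOrbitLipschitzWith

theorem strong_orbit_contraction_common_fixed_point_general
    {S X : Type*} [MetricSpace X] [CompleteSpace X]
    (act : S → X → X)
    (k : ℝ≥0) (hk : k < 1)
    (hstrong : ∀ (s : S) (x y : X),
      (edist (act s x) (act s y) ⊔ ⨆ t : S, edist (act s x) (act t (act s y)))
        ≤ (k : ℝ≥0∞) * (edist x y ⊔ ⨆ t : S, edist x (act t y)))
    (hbdd : ∃ x₀ : X, (⨆ t : S, edist x₀ (act t x₀)) < ⊤) :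
    ∃ x : X, ∀ s : S, act s x = x := by
  obtain ⟨x₀, hx₀⟩ := hbdd
  have h : StrongOrbitLipschitzWith k act := hstrong
  exact h.exists_forall_act_eq_self hk (by rw [orbitEDist_self]; exact hx₀.ne)

/-- A strong-orbit k-Lipschitzian semigroup action with `k < 1` on a complete metric space
with a bounded orbit has a common fixed point. -/
theorem strong_orbit_contraction_common_fixed_point
    {S X : Type*} [Semigroup S] [MetricSpace X] [CompleteSpace X]
    (act : S → X → X) (hact : ∀ (s t : S) (x : X), act (s * t) x = act s (act t x))
    (k : ℝ≥0) (hk : k < 1)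
    (hstrong : ∀ (s : S) (x y : X),
      (edist (act s x) (act s y) ⊔ ⨆ t : S, edist (act s x) (act t (act s y)))
        ≤ (k : ℝ≥0∞) * (edist x y ⊔ ⨆ t : S, edist x (act t y)))
    (hbdd : ∃ x₀ : X, (⨆ t : S, edist x₀ (act t x₀)) < ⊤) :
    ∃ x : X, ∀ s : S, act s x = x :=
  strong_orbit_contraction_common_fixed_point_general act k hk hstrong hbdd
end
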